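/- Define h(x,y) = cos(2x+2y) − 2 sin 2x sin 2y − cos²x cos²y. Then h(x,y) ≥ −3.3 for all (x,y) ∈ [0, π/2] × [0, π/2]. Moreover, h(π/4, π/4) = −3.25 while the partial derivatives satisfy h_x(π/4, π/4) = 1/2 ≠ 0 and h_y(π/4, π/4) = 1/2 ≠ 0, so (π/4, π/4) is not a critical point of h. -/

import Mathlib

/-!
In the double angles `c = cos 2x`, `s = sin 2x`, `d = cos 2y`, `t = sin 2y` one has
`h = (3/4) c d − 3 s t − (1 + c + d)/4`, and since `s² + c² = t² + d² = 1`,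
`h + 49/15 = (3/2)(s − t)² + (15/16)(c + d − 2/15)² + (9/16)(c − d)²`.
Hence `h ≥ −49/15 > −3.3` on all of `ℝ²`, with equality where `c = d = 1/15` and `s = t`.
-/

open Real

/-- the function `h(x,y) = cos(2x+2y) − 2 sin 2x sin 2y − cos²x cos²y` of
(3.35) / Remark 4.10. -/
noncomputable def hfun (x y : ℝ) : ℝ :=
  Real.cos (2 * x + 2 * y) - 2 * Real.sin (2 * x) * Real.sin (2 * y)
    - Real.cos x ^ 2 * Real.cos y ^ 2

theorem hfun_eq_double_angle (x y : ℝ) :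
    hfun x y = 3 / 4 * cos (2 * x) * cos (2 * y) - 3 * sin (2 * x) * sin (2 * y)
      - (1 + cos (2 * x) + cos (2 * y)) / 4 := by
  rw [hfun, cos_add, cos_sq x, cos_sq y]
  ring

theorem hfun_comm (x y : ℝ) : hfun x y = hfun y x := by
  simp only [hfun, add_comm (2 * x), mul_comm (cos x ^ 2)]
  ring

theorem hfun_add_eq_sum_sq (x y : ℝ) :
    hfun x y + 49 / 15 = 3 / 2 * (sin (2 * x) - sin (2 * y)) ^ 2
      + 15 / 16 * (cos (2 * x) + cos (2 * y) - 2 / 15) ^ 2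
      + 9 / 16 * (cos (2 * x) - cos (2 * y)) ^ 2 := by
  rw [hfun_eq_double_angle]
  linear_combination (-3 / 2 : ℝ) * sin_sq_add_cos_sq (2 * x) - 3 / 2 * sin_sq_add_cos_sq (2 * y)

theorem neg_49_div_15_le_hfun (x y : ℝ) : -49 / 15 ≤ hfun x y := by
  have : 0 ≤ hfun x y + 49 / 15 := by
    rw [hfun_add_eq_sum_sq]
    positivity
  linarith

theorem hasDerivAt_hfun_left (x y : ℝ) :
    HasDerivAt (fun x => hfun x y)
      (-(3 / 2) * sin (2 * x) * cos (2 * y) - 6 * cos (2 * x) * sin (2 * y) + sin (2 * x) / 2) x := by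
  simp only [hfun_eq_double_angle]
  have hcos := (hasDerivAt_const_mul (x := x) (2 : ℝ)).cos
  have hsin := (hasDerivAt_const_mul (x := x) (2 : ℝ)).sin
  exact ((((hcos.const_mul (3 / 4)).mul_const (cos (2 * y))).sub
    ((hsin.const_mul 3).mul_const (sin (2 * y)))).sub
    (((hcos.const_add 1).add_const (cos (2 * y))).div_const 4)).congr_deriv (by ring)

theorem deriv_hfun_left_pi_div_four : deriv (fun x => hfun x (π / 4)) (π / 4) = 1 / 2 := by
  rw [(hasDerivAt_hfun_left _ _).deriv, show 2 * (π / 4) = π / 2 by ring]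
  norm_num

theorem deriv_hfun_right_pi_div_four : deriv (fun y => hfun (π / 4) y) (π / 4) = 1 / 2 := by
  simpa only [hfun_comm (π / 4)] using deriv_hfun_left_pi_div_four

theorem hfun_pi_div_four : hfun (π / 4) (π / 4) = -13 / 4 := by
  rw [hfun_eq_double_angle, show 2 * (π / 4) = π / 2 by ring]
  norm_num

/-- **Estimate (3.36) and Remark 4.10.** The function
`h(x,y) = cos(2x+2y) − 2 sin 2x sin 2y − cos²x cos²y` satisfies
`h(x,y) ≥ −3.3` on `[0, π/2] × [0, π/2]`.  Moreover `h(π/4, π/4) = −3.25`,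
while `h_x(π/4, π/4) = 1/2 ≠ 0` and `h_y(π/4, π/4) = 1/2 ≠ 0`, so
`(π/4, π/4)` is not a critical point of `h`. -/
theorem hfun_lower_estimate :
    (∀ x ∈ Set.Icc (0 : ℝ) (π / 2), ∀ y ∈ Set.Icc (0 : ℝ) (π / 2),
      (-3.3 : ℝ) ≤ hfun x y)
    ∧ hfun (π / 4) (π / 4) = (-3.25 : ℝ)
    ∧ deriv (fun x => hfun x (π / 4)) (π / 4) = 1 / 2
    ∧ deriv (fun y => hfun (π / 4) y) (π / 4) = 1 / 2
    ∧ deriv (fun x => hfun x (π / 4)) (π / 4) ≠ 0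
    ∧ deriv (fun y => hfun (π / 4) y) (π / 4) ≠ 0 := by
  refine ⟨fun x _ y _ => le_trans (by norm_num) (neg_49_div_15_le_hfun x y),
    by rw [hfun_pi_div_four]; norm_num, deriv_hfun_left_pi_div_four, deriv_hfun_right_pi_div_four,
    ?_, ?_⟩
  · rw [deriv_hfun_left_pi_div_four]; norm_num
  · rw [deriv_hfun_right_pi_div_four]; norm_num
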